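/- arXiv:2006.07771 — 2 statements merged into one kernel-verified Lean document; each statement's English description precedes it below -/
import Mathlib

section
/- Fix σ > 0, τ > 0 and s₁ > 0, and for s₂ > 0 set d₊(s₂) = (log(s₁/s₂) + σ²τ/2)/(σ√τ) and d₋(s₂) = (log(s₁/s₂) − σ²τ/2)/(σ√τ). Then the Margrabe price V(s₂) = s₁·N(d₊(s₂)) − s₂·N(d₋(s₂)) is differentiable in s₂ on (0,∞) and its derivative (the second Delta of the Margrabe Exchange Option) is dV/ds₂ = −N(d₋(s₂)). -/
/-!
By the chain rule, the two terms involving the density `N'` cancel, leaving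
`-N(d₋)`. The cancellation is the identity `s₁·N'(d₊) = s₂·N'(d₋)`, which holds because
`d₊² - d₋² = 2·log(s₁/s₂)`.
-/

open Real Filter Topology MeasureTheory

/-- Standard normal density `N'(x) = (1/√(2π))·exp(−x²/2)`. -/
noncomputable def stdGaussianPDF (x : ℝ) : ℝ :=
  (Real.sqrt (2 * Real.pi))⁻¹ * Real.exp (-x ^ 2 / 2)

/-- Standard normal cumulative distribution function `N`. -/
noncomputable def stdGaussianCDF (x : ℝ) : ℝ :=
  ∫ t in Set.Iic x, stdGaussianPDF t

lemma integrable_stdGaussianPDF : Integrable stdGaussianPDF := by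
  refine ((integrable_exp_neg_mul_sq (b := 1 / 2) (by norm_num)).const_mul
    (√(2 * π))⁻¹).congr (.of_forall fun x => ?_)
  simp only [stdGaussianPDF]
  ring_nf

lemma continuous_stdGaussianPDF : Continuous stdGaussianPDF := by
  unfold stdGaussianPDF
  fun_prop

lemma hasDerivAt_stdGaussianCDF (x : ℝ) : HasDerivAt stdGaussianCDF (stdGaussianPDF x) x := by
  have hint := integrable_stdGaussianPDF
  have hcont := continuous_stdGaussianPDF
  have hsplit : stdGaussianCDF =
      fun y => stdGaussianCDF 0 + ∫ t in (0 : ℝ)..y, stdGaussianPDF t := by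
    funext y
    rw [stdGaussianCDF, stdGaussianCDF,
      ← intervalIntegral.integral_Iic_sub_Iic hint.integrableOn hint.integrableOn]
    ring
  rw [hsplit]
  exact (intervalIntegral.integral_hasDerivAt_right hint.intervalIntegrable
    (hcont.stronglyMeasurableAtFilter _ _) hcont.continuousAt).const_add _

lemma stdGaussianPDF_eq_mul_exp (x y : ℝ) :
    stdGaussianPDF x = stdGaussianPDF y * exp ((y ^ 2 - x ^ 2) / 2) := by
  simp only [stdGaussianPDF]
  rw [mul_assoc, ← exp_add]
  ring_nf

lemma hasDerivAt_log_const_div {c x : ℝ} (hc : c ≠ 0) (hx : x ≠ 0) :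
    HasDerivAt (fun s => log (c / s)) (-x⁻¹) x := by
  have h := ((hasDerivAt_inv hx).const_mul c).log (mul_ne_zero hc (inv_ne_zero hx))
  simp only [← div_eq_mul_inv] at h
  convert h using 1
  field_simp

section Margrabe

variable {s₁ s₂ k : ℝ}

lemma mul_stdGaussianPDF_margrabe (hs₁ : 0 < s₁) (hs₂ : 0 < s₂) (hk : k ≠ 0) :
    s₁ * stdGaussianPDF ((log (s₁ / s₂) + k ^ 2 / 2) / k) =
      s₂ * stdGaussianPDF ((log (s₁ / s₂) - k ^ 2 / 2) / k) := by
  have hexponent : (((log (s₁ / s₂) - k ^ 2 / 2) / k) ^ 2 -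
      ((log (s₁ / s₂) + k ^ 2 / 2) / k) ^ 2) / 2 = -log (s₁ / s₂) := by
    field_simp
    ring
  rw [stdGaussianPDF_eq_mul_exp _ ((log (s₁ / s₂) - k ^ 2 / 2) / k), hexponent, exp_neg,
    exp_log (div_pos hs₁ hs₂), inv_div]
  field_simp

lemma hasDerivAt_margrabe (hs₁ : 0 < s₁) (hs₂ : 0 < s₂) (hk : k ≠ 0) :
    HasDerivAt
      (fun s => s₁ * stdGaussianCDF ((log (s₁ / s) + k ^ 2 / 2) / k) -
        s * stdGaussianCDF ((log (s₁ / s) - k ^ 2 / 2) / k))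
      (-stdGaussianCDF ((log (s₁ / s₂) - k ^ 2 / 2) / k)) s₂ := by
  have hlog := hasDerivAt_log_const_div hs₁.ne' hs₂.ne'
  have hplus := (hasDerivAt_stdGaussianCDF _).comp s₂ ((hlog.add_const (k ^ 2 / 2)).div_const k)
  have hminus := (hasDerivAt_stdGaussianCDF _).comp s₂ ((hlog.sub_const (k ^ 2 / 2)).div_const k)
  refine ((hplus.const_mul s₁).sub ((hasDerivAt_id s₂).mul hminus)).congr_deriv ?_
  simp only [id_eq, one_mul, Function.comp_apply]
  linear_combination (-s₂⁻¹ / k) * mul_stdGaussianPDF_margrabe hs₁ hs₂ hk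

end Margrabe

/-- The Margrabe price `V(s₂) = s₁·N(d₊(s₂)) − s₂·N(d₋(s₂))` is differentiable in `s₂` on
`(0,∞)` with derivative (the second Delta) `−N(d₋(s₂))`. -/
theorem margrabe_delta_two (σ τ s₁ : ℝ) (hσ : 0 < σ) (hτ : 0 < τ) (hs₁ : 0 < s₁) :
    ∀ s₂ : ℝ, 0 < s₂ →
      HasDerivAt
        (fun s₂ : ℝ =>
          s₁ * stdGaussianCDF ((Real.log (s₁ / s₂) + σ ^ 2 * τ / 2) / (σ * Real.sqrt τ)) -
          s₂ * stdGaussianCDF ((Real.log (s₁ / s₂) - σ ^ 2 * τ / 2) / (σ * Real.sqrt τ)))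
        (-stdGaussianCDF ((Real.log (s₁ / s₂) - σ ^ 2 * τ / 2) / (σ * Real.sqrt τ))) s₂ := by
  intro s₂ hs₂
  have hvariance : σ ^ 2 * τ = (σ * √τ) ^ 2 := by rw [mul_pow, Real.sq_sqrt hτ.le]
  rw [hvariance]
  exact hasDerivAt_margrabe hs₁ hs₂ (mul_pos hσ (sqrt_pos.mpr hτ)).ne'
end

section
/- Fix σ > 0 and s₁, s₂ > 0, write L = log(s₁/s₂), and for τ > 0 set d₊(τ) = (L + σ²τ/2)/(σ√τ) and Γ₁₁(τ) = N'(d₊(τ))/(σ·s₁·√τ). Then Γ₁₁ is differentiable in τ on (0,∞) and its derivative (the Colour₁₁ of the Margrabe Exchange Option) equals −(Γ₁₁(τ)/(8σ²τ²))·(σ⁴τ² + 4σ²τ − 4L²). -/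
open Real Filter Topology MeasureTheory

/-! The Colour is `Γ₁₁ · (−d₊ · ∂d₊/∂τ − 1/(2τ))`: the first term comes from `N''(x) = −x N'(x)`,
the second from the factor `1/√τ`. Since `d₊ = L/(σ√τ) + σ√τ/2`, the product `d₊ · ∂d₊/∂τ` is a
difference of squares, `(σ⁴τ² − 4L²)/(8σ²τ²)`. -/

theorem hasDerivAt_stdGaussianPDF (x : ℝ) :
    HasDerivAt stdGaussianPDF (-x * stdGaussianPDF x) x := by
  have hexp : HasDerivAt (fun y : ℝ => -y ^ 2 / 2) (-x) x :=
    ((hasDerivAt_pow 2 x).neg.div_const 2).congr_deriv (by ring)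
  exact (hexp.exp.const_mul _).congr_deriv (by unfold stdGaussianPDF; ring)

theorem HasDerivAt.stdGaussianPDF {f : ℝ → ℝ} {f' x : ℝ} (hf : HasDerivAt f f' x) :
    HasDerivAt (fun t => stdGaussianPDF (f t)) (-f x * f' * stdGaussianPDF (f x)) x :=
  ((hasDerivAt_stdGaussianPDF (f x)).comp x hf).congr_deriv (by ring)

noncomputable def dPlus (L σ τ : ℝ) : ℝ :=
  (L + σ ^ 2 * τ / 2) / (σ * √τ)

theorem hasDerivAt_dPlus (L : ℝ) {σ τ : ℝ} (hσ : σ ≠ 0) (hτ : 0 < τ) :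
    HasDerivAt (dPlus L σ) ((σ ^ 2 * τ - 2 * L) / (4 * σ * τ * √τ)) τ := by
  have hnum : HasDerivAt (fun t : ℝ => L + σ ^ 2 * t / 2) (σ ^ 2 / 2) τ := by
    simpa using ((hasDerivAt_id τ).const_mul (σ ^ 2)).div_const 2 |>.const_add L
  have hden := (hasDerivAt_sqrt hτ.ne').const_mul σ
  refine (hnum.div hden (by positivity)).congr_deriv ?_
  field_simp
  rw [sq_sqrt hτ.le]
  ring

theorem dPlus_mul_deriv_dPlus (L : ℝ) {σ τ : ℝ} (hσ : σ ≠ 0) (hτ : 0 < τ) :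
    dPlus L σ τ * ((σ ^ 2 * τ - 2 * L) / (4 * σ * τ * √τ)) =
      (σ ^ 4 * τ ^ 2 - 4 * L ^ 2) / (8 * σ ^ 2 * τ ^ 2) := by
  unfold dPlus
  field_simp
  rw [sq_sqrt hτ.le]
  ring

theorem hasDerivAt_stdGaussianPDF_dPlus_div_sqrt (L : ℝ) {σ s τ : ℝ} (hσ : σ ≠ 0) (hs : s ≠ 0)
    (hτ : 0 < τ) :
    HasDerivAt (fun t => stdGaussianPDF (dPlus L σ t) / (σ * s * √t))
      (-(stdGaussianPDF (dPlus L σ τ) / (σ * s * √τ) / (8 * σ ^ 2 * τ ^ 2)) *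
        (σ ^ 4 * τ ^ 2 + 4 * σ ^ 2 * τ - 4 * L ^ 2)) τ := by
  have hnum := (hasDerivAt_dPlus L hσ hτ).stdGaussianPDF
  have hden := (hasDerivAt_sqrt hτ.ne').const_mul (σ * s)
  refine (hnum.div hden (by positivity)).congr_deriv ?_
  rw [neg_mul, dPlus_mul_deriv_dPlus L hσ hτ]
  field_simp
  rw [sq_sqrt hτ.le]
  ring

theorem margrabe_colour_one_one_general (σ s₁ s₂ : ℝ) (hσ : 0 < σ) (hs₁ : 0 < s₁) :
    ∀ τ : ℝ, 0 < τ →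
      HasDerivAt
        (fun τ : ℝ =>
          stdGaussianPDF ((Real.log (s₁ / s₂) + σ ^ 2 * τ / 2) / (σ * Real.sqrt τ)) /
            (σ * s₁ * Real.sqrt τ))
        (-(stdGaussianPDF ((Real.log (s₁ / s₂) + σ ^ 2 * τ / 2) / (σ * Real.sqrt τ)) /
            (σ * s₁ * Real.sqrt τ) / (8 * σ ^ 2 * τ ^ 2)) *
          (σ ^ 4 * τ ^ 2 + 4 * σ ^ 2 * τ - 4 * Real.log (s₁ / s₂) ^ 2)) τ :=
  fun _ hτ => hasDerivAt_stdGaussianPDF_dPlus_div_sqrt _ hσ.ne' hs₁.ne' hτ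

/-- `Γ₁₁(τ) = N'(d₊(τ))/(σ·s₁·√τ)` is differentiable in `τ` on `(0,∞)` with derivative
(the Colour₁₁) `−(Γ₁₁(τ)/(8σ²τ²))·(σ⁴τ² + 4σ²τ − 4L²)`, where `L = log(s₁/s₂)`. -/
theorem margrabe_colour_one_one (σ s₁ s₂ : ℝ) (hσ : 0 < σ) (hs₁ : 0 < s₁) (hs₂ : 0 < s₂) :
    ∀ τ : ℝ, 0 < τ →
      HasDerivAt
        (fun τ : ℝ =>
          stdGaussianPDF ((Real.log (s₁ / s₂) + σ ^ 2 * τ / 2) / (σ * Real.sqrt τ)) /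
            (σ * s₁ * Real.sqrt τ))
        (-(stdGaussianPDF ((Real.log (s₁ / s₂) + σ ^ 2 * τ / 2) / (σ * Real.sqrt τ)) /
            (σ * s₁ * Real.sqrt τ) / (8 * σ ^ 2 * τ ^ 2)) *
          (σ ^ 4 * τ ^ 2 + 4 * σ ^ 2 * τ - 4 * Real.log (s₁ / s₂) ^ 2)) τ :=
  margrabe_colour_one_one_general σ s₁ s₂ hσ hs₁
end
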